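/- arXiv:2305.08608 — 2 statements merged into one kernel-verified Lean document; each statement's English description precedes it below -/
import Mathlib

section
/- Let A be a Schur ring over the infinite dihedral group D∞ and let C be the basic set of A containing z. If C is contained in the subgroup Z = ⟨z⟩, then Z is an A-subgroup. -/
open scoped BigOperators

/-- A Schur ring over the group `G` with coefficients in the field `F`, presented by its
partition into finite nonempty basic sets. -/
structure SchurRing (F : Type) [Field F] [CharZero F] (G : Type) [Group G] [DecidableEq G] where
  /-- the basic sets -/
  parts : Set (Finset G)
  nonempty : ∀ C ∈ parts, C.Nonempty
  cover : ∀ g : G, ∃ C ∈ parts, g ∈ C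
  eq_or_disjoint : ∀ C ∈ parts, ∀ D ∈ parts, C = D ∨ Disjoint C D
  one_mem : ({1} : Finset G) ∈ parts
  inv_mem : ∀ C ∈ parts, C.image (·⁻¹) ∈ parts
  mul_mem : ∀ C ∈ parts, ∀ D ∈ parts, ∃ S : Finset (Finset G),
    (↑S : Set (Finset G)) ⊆ parts ∧ ∃ coef : Finset G → F,
      (∑ g ∈ C, MonoidAlgebra.single g (1 : F)) * (∑ g ∈ D, MonoidAlgebra.single g (1 : F))
        = ∑ E ∈ S, coef E • ∑ g ∈ E, MonoidAlgebra.single g (1 : F)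

/-- A subset of `G` is an `A`-set if it is a union of basic sets of `A`. -/
def SchurRing.IsASet {F : Type} [Field F] [CharZero F] {G : Type} [Group G] [DecidableEq G]
    (A : SchurRing F G) (X : Set G) : Prop :=
  ∃ 𝒮 : Set (Finset G), 𝒮 ⊆ A.parts ∧ X = ⋃ C ∈ 𝒮, (C : Set G)

/-- The infinite dihedral group, realized as `DihedralGroup 0`. -/
abbrev Dinf : Type := DihedralGroup 0

/-- The generator `z` of infinite order. -/
def zz : Dinf := DihedralGroup.r 1

/-- The reflection `s` of order two. -/
def ss : Dinf := DihedralGroup.sr 0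

/-!
In characteristic 0 the coefficient of `y` in `C̄ * D̄` is the number of factorizations
`y = c * d` with `c ∈ C`, `d ∈ D`, so the support of `C̄ * D̄` is `C * D`; as a combination of
simple quantities of pairwise disjoint basic sets it is then a union of basic sets. Hence `A`-sets
are closed under products and inverses, so the subgroup generated by a basic set is an
`A`-subgroup. Finally `z ∈ C ⊆ ⟨z⟩` forces `⟨C⟩ = ⟨z⟩`.
-/

open Finset
open scoped Pointwise

namespace SchurRing

section SimpleQuantity

variable {F : Type} [Semiring F] {G : Type} [DecidableEq G]

variable (F) in
noncomputable def simpleQuantity (C : Finset G) : MonoidAlgebra F G :=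
  ∑ g ∈ C, MonoidAlgebra.single g 1

lemma coeff_simpleQuantity (C : Finset G) (y : G) :
    (simpleQuantity F C).coeff y = if y ∈ C then 1 else 0 := by
  simp only [simpleQuantity, MonoidAlgebra.coeff_sum, Finsupp.finsetSum_apply,
    MonoidAlgebra.coeff_single, Finsupp.single_apply]
  exact Finset.sum_ite_eq' C y fun _ => 1

lemma coeff_simpleQuantity_mul [Monoid G] (C D : Finset G) (y : G) :
    (simpleQuantity F C * simpleQuantity F D).coeff y = #{p ∈ C ×ˢ D | p.1 * p.2 = y} := by
  simp only [simpleQuantity, Finset.sum_mul_sum, MonoidAlgebra.single_mul_single, one_mul,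
    MonoidAlgebra.coeff_sum, Finsupp.finsetSum_apply, MonoidAlgebra.coeff_single,
    Finsupp.single_apply]
  rw [← Finset.sum_product', Finset.sum_boole]

lemma coeff_simpleQuantity_mul_ne_zero_iff [Monoid G] [CharZero F] {C D : Finset G} {y : G} :
    (simpleQuantity F C * simpleQuantity F D).coeff y ≠ 0 ↔ y ∈ C * D := by
  rw [coeff_simpleQuantity_mul, Nat.cast_ne_zero, Finset.card_ne_zero, Finset.filter_nonempty_iff,
    Finset.mem_mul]
  simp only [Finset.mem_product, Prod.exists, exists_and_left, and_assoc]

end SimpleQuantity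

variable {F : Type} [Field F] [CharZero F] {G : Type} [Group G] [DecidableEq G]

lemma coeff_sum_smul_simpleQuantity (A : SchurRing F G) {S : Finset (Finset G)}
    (hS : (S : Set (Finset G)) ⊆ A.parts) (coef : Finset G → F) {E : Finset G} (hE : E ∈ S)
    {y : G} (hy : y ∈ E) : (∑ E' ∈ S, coef E' • simpleQuantity F E').coeff y = coef E := by
  simp only [MonoidAlgebra.coeff_sum, Finsupp.finsetSum_apply, MonoidAlgebra.coeff_smul,
    Finsupp.smul_apply, coeff_simpleQuantity, smul_eq_mul, mul_ite, mul_one, mul_zero]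
  refine (Finset.sum_eq_single E (fun E' hE' hne => ?_) (absurd hE)).trans (if_pos hy)
  exact if_neg <| Finset.disjoint_right.mp
    ((A.eq_or_disjoint E' (hS hE') E (hS hE)).resolve_left hne) hy

lemma isASet_iff (A : SchurRing F G) {X : Set G} :
    A.IsASet X ↔ ∀ x ∈ X, ∃ E ∈ A.parts, x ∈ E ∧ (E : Set G) ⊆ X := by
  refine ⟨?_, fun h => ⟨{E | E ∈ A.parts ∧ (E : Set G) ⊆ X}, fun E hE => hE.1, ?_⟩⟩
  · rintro ⟨𝒮, h𝒮, rfl⟩ x hx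
    obtain ⟨E, hE, hxE⟩ := Set.mem_iUnion₂.mp hx
    exact ⟨E, h𝒮 hE, hxE, Set.subset_biUnion_of_mem (u := fun E : Finset G => (E : Set G)) hE⟩
  · ext x
    simp only [Set.mem_iUnion, Set.mem_ofPred_eq, exists_prop]
    exact ⟨fun hx => (h x hx).imp fun E hE => ⟨⟨hE.1, hE.2.2⟩, hE.2.1⟩,
      fun ⟨E, ⟨_, hEX⟩, hxE⟩ => hEX hxE⟩

lemma isASet_of_forall_mem_exists (A : SchurRing F G) {X : Set G}
    (h : ∀ x ∈ X, ∃ Y, A.IsASet Y ∧ x ∈ Y ∧ Y ⊆ X) : A.IsASet X := by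
  refine A.isASet_iff.mpr fun x hx => ?_
  obtain ⟨Y, hY, hxY, hYX⟩ := h x hx
  obtain ⟨E, hE, hxE, hEY⟩ := A.isASet_iff.mp hY x hxY
  exact ⟨E, hE, hxE, hEY.trans hYX⟩

lemma isASet_coe (A : SchurRing F G) {C : Finset G} (hC : C ∈ A.parts) :
    A.IsASet (C : Set G) :=
  ⟨{C}, Set.singleton_subset_iff.mpr hC, by simp⟩

lemma isASet_mul_of_mem_parts (A : SchurRing F G) {C D : Finset G} (hC : C ∈ A.parts)
    (hD : D ∈ A.parts) : A.IsASet ((C : Set G) * D) := by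
  obtain ⟨S, hS, coef, heq⟩ := A.mul_mem C hC D hD
  change simpleQuantity F C * simpleQuantity F D = ∑ E ∈ S, coef E • simpleQuantity F E at heq
  have hcoeff (y : G) : y ∈ C * D ↔ (∑ E ∈ S, coef E • simpleQuantity F E).coeff y ≠ 0 := by
    rw [← heq, coeff_simpleQuantity_mul_ne_zero_iff]
  rw [← Finset.coe_mul, isASet_iff]
  intro x hx
  obtain ⟨E, hES, hxE⟩ : ∃ E ∈ S, x ∈ E := by
    by_contra! h
    refine (hcoeff x).mp hx ?_
    simp only [MonoidAlgebra.coeff_sum, Finsupp.finsetSum_apply]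
    exact Finset.sum_eq_zero fun E hE => by simp [coeff_simpleQuantity, h E hE]
  refine ⟨E, hS hES, hxE, fun y hy => ?_⟩
  rw [Finset.mem_coe, hcoeff, coeff_sum_smul_simpleQuantity A hS coef hES hy,
    ← coeff_sum_smul_simpleQuantity A hS coef hES hxE, ← hcoeff]
  exact hx

lemma IsASet.mul {A : SchurRing F G} {X Y : Set G} (hX : A.IsASet X) (hY : A.IsASet Y) :
    A.IsASet (X * Y) := by
  rw [isASet_iff] at hX hY ⊢
  rintro _ ⟨x, hx, y, hy, rfl⟩
  obtain ⟨E, hE, hxE, hEX⟩ := hX x hx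
  obtain ⟨E', hE', hyE', hE'Y⟩ := hY y hy
  obtain ⟨E'', hE'', hxyE'', hE''EE'⟩ :=
    A.isASet_iff.mp (A.isASet_mul_of_mem_parts hE hE') (x * y) (Set.mul_mem_mul hxE hyE')
  exact ⟨E'', hE'', hxyE'', hE''EE'.trans (Set.mul_subset_mul hEX hE'Y)⟩

lemma IsASet.inv {A : SchurRing F G} {X : Set G} (hX : A.IsASet X) : A.IsASet X⁻¹ := by
  rw [isASet_iff] at hX ⊢
  intro x hx
  obtain ⟨E, hE, hxE, hEX⟩ := hX x⁻¹ hx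
  refine ⟨E.image (·⁻¹), A.inv_mem E hE, Finset.mem_image.mpr ⟨x⁻¹, hxE, inv_inv x⟩, ?_⟩
  rw [Finset.coe_image, Set.image_inv_eq_inv]
  exact Set.inv_subset_inv.mpr hEX

theorem isASet_closure (A : SchurRing F G) {C : Finset G} (hC : C ∈ A.parts) :
    A.IsASet (Subgroup.closure (C : Set G) : Set G) := by
  refine A.isASet_of_forall_mem_exists fun x hx => ?_
  induction hx using Subgroup.closure_induction with
  | mem x hx => exact ⟨C, A.isASet_coe hC, hx, Subgroup.subset_closure⟩
  | one => exact ⟨{1}, by simpa using A.isASet_coe A.one_mem, rfl, by simp⟩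
  | mul x y _ _ ihx ihy =>
    obtain ⟨X, hX, hxX, hXH⟩ := ihx
    obtain ⟨Y, hY, hyY, hYH⟩ := ihy
    exact ⟨X * Y, hX.mul hY, Set.mul_mem_mul hxX hyY,
      Set.mul_subset_iff.mpr fun a ha b hb => Subgroup.mul_mem _ (hXH ha) (hYH hb)⟩
  | inv x _ ih =>
    obtain ⟨X, hX, hxX, hXH⟩ := ih
    exact ⟨X⁻¹, hX.inv, by simpa using hxX,
      fun y hy => by simpa using Subgroup.inv_mem _ (hXH hy)⟩

end SchurRing

/-- If the basic set containing `z` is contained in `⟨z⟩`, then `⟨z⟩` is an `A`-subgroup. -/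
theorem stmt_0 (F : Type) [Field F] [CharZero F] (A : SchurRing F Dinf)
    (C : Finset Dinf) (hC : C ∈ A.parts) (hzC : zz ∈ C)
    (hsub : (C : Set Dinf) ⊆ (Subgroup.zpowers zz : Subgroup Dinf)) :
    A.IsASet (Subgroup.zpowers zz : Subgroup Dinf) := by
  have hZ : Subgroup.zpowers zz = Subgroup.closure (C : Set Dinf) :=
    le_antisymm (Subgroup.zpowers_le.mpr (Subgroup.subset_closure hzC))
      ((Subgroup.closure_le _).mpr hsub)
  rw [hZ]
  exact A.isASet_closure hC
end

section
/- Let A be a Schur ring over the infinite dihedral group D∞, let i be a nonzero integer, suppose C = {z^i, z^{−i}} is a basic set of A, and let D be a basic set of A containing both s and z^i s. Then there is exactly one pair (x, y) ∈ C × D with xy = z^i s (i.e. the structure constant λ_{CDD} equals 1). -/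
open scoped BigOperators

/-!
The only pairs in `C × D` with product `z^i s` are `(z^i, s)` and `(z^{-i}, z^{2i} s)`, so it
suffices to show `z^{2i} s ∉ D`. Since `C̄ D̄` lies in the Schur ring, the number of such pairs is
the same for every element of the basic set `D`. If `z^{2i} s` were in `D`, that number would be
`2` at `z^i s`, hence `2` at every `x ∈ D`, i.e. `z^{±i} x ∈ D` for all `x ∈ D`. A finite nonempty
set stable under left multiplication by `z^i` forces `z^i` to have finite order, which is false
in `D∞`.
-/

open Finset MonoidAlgebra

section Counting

variable {G : Type} [DecidableEq G]

/-- The structure constant `λ_{CDE}` when `g ∈ E`. -/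
def mulCount [Mul G] (C D : Finset G) (g : G) : ℕ := #{p ∈ C ×ˢ D | p.1 * p.2 = g}

variable {F : Type} [Semiring F]

lemma coeff_sum_single_one_apply (E : Finset G) (g : G) :
    (∑ x ∈ E, single x (1 : F)).coeff g = if g ∈ E then 1 else 0 := by
  simp only [coeff_sum, coeff_single, Finsupp.finsetSum_apply, Finsupp.single_apply, sum_ite_eq']

lemma coeff_sum_single_one_mul_sum_single_one [Mul G] (C D : Finset G) (g : G) :
    ((∑ x ∈ C, single x (1 : F)) * (∑ y ∈ D, single y (1 : F))).coeff g = mulCount C D g := by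
  simp only [sum_mul_sum, single_mul_single, one_mul, ← sum_product', coeff_sum, coeff_single,
    Finsupp.finsetSum_apply, Finsupp.single_apply, sum_boole, mulCount]

lemma mulCount_pair [Group G] {a b : G} (hab : a ≠ b) (D : Finset G) (g : G) :
    mulCount {a, b} D g = (if a⁻¹ * g ∈ D then 1 else 0) + (if b⁻¹ * g ∈ D then 1 else 0) := by
  have count_single :
      ∀ c : G, (∑ y ∈ D, if c * y = g then 1 else 0) = if c⁻¹ * g ∈ D then 1 else 0 := by
    intro c
    simp only [← eq_inv_mul_iff_mul_eq, sum_ite_eq']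
  rw [mulCount, card_filter, sum_product, sum_pair hab, count_single, count_single]

end Counting

lemma IsOfFinOrder.of_forall_mul_mem {G : Type} [Group G] {a g : G} {D : Finset G} (hg : g ∈ D)
    (hD : ∀ x ∈ D, a * x ∈ D) : IsOfFinOrder a := by
  have mem : ∀ n : ℕ, a ^ n * g ∈ D := by
    intro n
    induction n with
    | zero => simpa using hg
    | succ n ih => simpa [pow_succ', mul_assoc] using hD _ ih
  obtain ⟨m, n, hmn, h⟩ := Finite.exists_ne_map_eq_of_infinite (fun n : ℕ => (⟨_, mem n⟩ : D))
  by_contra hinf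
  exact hmn <|
    injective_pow_iff_not_isOfFinOrder.mpr hinf (mul_right_cancel (congrArg Subtype.val h))

namespace SchurRing

variable {F G : Type} [Field F] [CharZero F] [Group G] [DecidableEq G] (A : SchurRing F G)

lemma coeff_apply_eq_of_mem {S : Finset (Finset G)} (hS : (S : Set (Finset G)) ⊆ A.parts)
    (coef : Finset G → F) {E : Finset G} (hE : E ∈ A.parts) {g g' : G} (hg : g ∈ E)
    (hg' : g' ∈ E) :
    (∑ E' ∈ S, coef E' • ∑ x ∈ E', single x (1 : F)).coeff g
      = (∑ E' ∈ S, coef E' • ∑ x ∈ E', single x (1 : F)).coeff g' := by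
  rw [coeff_sum, Finsupp.finsetSum_apply, Finsupp.finsetSum_apply]
  refine sum_congr rfl fun E' hE' => ?_
  rw [coeff_smul_apply, coeff_smul_apply, coeff_sum_single_one_apply, coeff_sum_single_one_apply]
  rcases A.eq_or_disjoint E hE E' (hS hE') with rfl | hdisj
  · simp [hg, hg']
  · simp [disjoint_left.mp hdisj hg, disjoint_left.mp hdisj hg']

lemma mulCount_eq_of_mem {C D E : Finset G} (hC : C ∈ A.parts) (hD : D ∈ A.parts)
    (hE : E ∈ A.parts) {g g' : G} (hg : g ∈ E) (hg' : g' ∈ E) :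
    mulCount C D g = mulCount C D g' := by
  obtain ⟨S, hS, coef, hCD⟩ := A.mul_mem C hC D hD
  have := A.coeff_apply_eq_of_mem hS coef hE hg hg'
  rw [← hCD, coeff_sum_single_one_mul_sum_single_one,
    coeff_sum_single_one_mul_sum_single_one] at this
  exact_mod_cast this

lemma isOfFinOrder_of_mul_mem_of_inv_mul_mem {a : G} (ha : a ≠ a⁻¹)
    (hC : {a, a⁻¹} ∈ A.parts) {D : Finset G} (hD : D ∈ A.parts) {g : G} (hg : g ∈ D)
    (hag : a * g ∈ D) (hag' : a⁻¹ * g ∈ D) :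
    IsOfFinOrder a := by
  refine IsOfFinOrder.of_forall_mul_mem hg fun x hx => ?_
  have := A.mulCount_eq_of_mem hC hD hD hx hg
  by_contra hax
  rw [mulCount_pair ha, mulCount_pair ha, inv_inv, if_pos hag', if_pos hag, if_neg hax] at this
  split_ifs at this <;> omega

end SchurRing

lemma zz_zpow (n : ℤ) : zz ^ n = DihedralGroup.r n :=
  DihedralGroup.r_one_zpow n

lemma not_isOfFinOrder_zz_zpow {i : ℤ} (hi : i ≠ 0) : ¬IsOfFinOrder (zz ^ i) := by
  rw [isOfFinOrder_iff_pow_eq_one]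
  rintro ⟨n, hn, h⟩
  rw [← zpow_natCast, ← zpow_mul, zz_zpow, ← DihedralGroup.r_zero] at h
  exact mul_ne_zero hi (by positivity) (DihedralGroup.r.inj h)

/-- If `C = {z^i, z^(-i)}` (with `i ≠ 0`) is a basic set and `D` is a basic set containing both
`s` and `z^i s`, then there is exactly one pair `(x, y) ∈ C × D` with `x * y = z^i s`;
i.e. the structure constant `λ_{CDD}` equals `1`. -/
theorem stmt_10 (F : Type) [Field F] [CharZero F] (A : SchurRing F Dinf)
    (i : ℤ) (hi : i ≠ 0)
    (hC : ({zz ^ i, zz ^ (-i)} : Finset Dinf) ∈ A.parts)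
    (D : Finset Dinf) (hD : D ∈ A.parts) (hsD : ss ∈ D) (hzsD : zz ^ i * ss ∈ D) :
    ((({zz ^ i, zz ^ (-i)} : Finset Dinf) ×ˢ D).filter
        (fun p => p.1 * p.2 = zz ^ i * ss)).card = 1 := by
  have hzi : zz ^ (-i) = (zz ^ i)⁻¹ := zpow_neg zz i
  have hne : zz ^ i ≠ (zz ^ i)⁻¹ := by
    rw [← hzi, zz_zpow, zz_zpow]
    intro h
    have : i = -i := DihedralGroup.r.inj h
    omega
  rw [hzi] at hC ⊢
  have h2i : zz ^ i * (zz ^ i * ss) ∉ D := fun h =>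
    not_isOfFinOrder_zz_zpow hi (A.isOfFinOrder_of_mul_mem_of_inv_mul_mem hne hC hD hzsD h
      (by rwa [inv_mul_cancel_left]))
  change mulCount _ _ _ = 1
  rw [mulCount_pair hne, inv_mul_cancel_left, inv_inv, if_pos hsD, if_neg h2i]
end
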